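/- Let $h \in L^2(Q_{\ell,T};\mathbb{R}^d)$ for some $\ell, T > 0$. For $t \in (0,T]$ let $\overline{h}_t(x') = \frac{1}{t}\int_0^t h(x',s)\,ds$. Then the map $t \mapsto \frac{t^2}{\ell^2} \fint_{Q_{\ell,t}} |h - \overline{h}_t|^2\,dx$ is non-decreasing on $(0,T]$. -/

import Mathlib

/-!
Write `m_t(x')` for the mean of `h(x', ·)` over `[0, t]`. Since `t⁻¹ ∫₀ᵗ h(x', s) ds = m_t(x')`,
Fubini turns the quantity into `(ℓ² |Q_ℓ|)⁻¹ ∫_{Q_ℓ} t ∫₀ᵗ |h(x', s) - m_t(x')|² ds dx'`, so it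
suffices that `t ↦ t ∫₀ᵗ |g - m_t|²` is non-decreasing for each fibre `g = h(x', ·)`. For `s ≤ t`
this holds because the mean minimises `c ↦ ∫₀ˢ |g - c|²`:
`s ∫₀ˢ |g - m_s|² ≤ s ∫₀ˢ |g - m_t|² ≤ s ∫₀ᵗ |g - m_t|² ≤ t ∫₀ᵗ |g - m_t|²`.
-/

open MeasureTheory Set

section Variance

variable {α E : Type*} [MeasurableSpace α] {μ : Measure α}
  [NormedAddCommGroup E] [InnerProductSpace ℝ E] [CompleteSpace E] {g : α → E}

theorem integral_norm_sub_sq_eq [IsFiniteMeasure μ] (hg : MemLp g 2 μ) (c : E) :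
    ∫ x, ‖g x - c‖ ^ 2 ∂μ
      = ∫ x, ‖g x - ⨍ y, g y ∂μ‖ ^ 2 ∂μ + μ.real univ * ‖⨍ y, g y ∂μ - c‖ ^ 2 := by
  set m := ⨍ y, g y ∂μ
  have hsq : Integrable (fun x => ‖g x - m‖ ^ 2) μ :=
    (memLp_two_iff_integrable_sq_norm (hg.sub (memLp_const m)).1).1 (hg.sub (memLp_const m))
  have hsub : Integrable (fun x => g x - m) μ := (hg.integrable one_le_two).sub (integrable_const m)
  -- the cross term vanishes because `g - m` has mean zero
  have hcross : ∫ x, inner ℝ (g x - m) (m - c) ∂μ = 0 := by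
    simp_rw [real_inner_comm (m - c)]
    rw [integral_inner hsub, integral_sub (hg.integrable one_le_two) (integrable_const m),
      integral_const, ← measure_smul_average, sub_self, inner_zero_right]
  calc ∫ x, ‖g x - c‖ ^ 2 ∂μ
      = ∫ x, (‖g x - m‖ ^ 2 + 2 * inner ℝ (g x - m) (m - c)) + ‖m - c‖ ^ 2 ∂μ := by
        congr 1 with x
        rw [← norm_add_sq_real, sub_add_sub_cancel]
    _ = _ := by
      have hlin : Integrable (fun x => 2 * inner ℝ (g x - m) (m - c)) μ :=
        (hsub.inner_const (m - c)).const_mul 2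
      rw [integral_add (f := fun x => ‖g x - m‖ ^ 2 + 2 * inner ℝ (g x - m) (m - c))
          (hsq.add hlin) (integrable_const _), integral_add hsq hlin,
        integral_const_mul, hcross, integral_const, smul_eq_mul]
      ring

theorem integral_norm_sub_average_sq_le [IsFiniteMeasure μ] (hg : MemLp g 2 μ) (c : E) :
    ∫ x, ‖g x - ⨍ y, g y ∂μ‖ ^ 2 ∂μ ≤ ∫ x, ‖g x - c‖ ^ 2 ∂μ := by
  rw [integral_norm_sub_sq_eq hg c]
  have : 0 ≤ μ.real univ * ‖⨍ y, g y ∂μ - c‖ ^ 2 := by positivity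
  linarith

theorem measureReal_mul_setIntegral_norm_sub_setAverage_sq_mono {A B : Set α} (hAB : A ⊆ B)
    (hB : μ B ≠ ⊤) (hg : MemLp g 2 (μ.restrict B)) :
    μ.real A * ∫ x in A, ‖g x - ⨍ y in A, g y ∂μ‖ ^ 2 ∂μ
      ≤ μ.real B * ∫ x in B, ‖g x - ⨍ y in B, g y ∂μ‖ ^ 2 ∂μ := by
  set m := ⨍ y in B, g y ∂μ
  have hA : μ A ≠ ⊤ := ne_top_of_le_ne_top hB (measure_mono hAB)
  have : IsFiniteMeasure (μ.restrict A) := isFiniteMeasure_restrict.2 hA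
  have : IsFiniteMeasure (μ.restrict B) := isFiniteMeasure_restrict.2 hB
  have hsq : IntegrableOn (fun x => ‖g x - m‖ ^ 2) B μ :=
    (memLp_two_iff_integrable_sq_norm (hg.sub (memLp_const m)).1).1 (hg.sub (memLp_const m))
  calc μ.real A * ∫ x in A, ‖g x - ⨍ y in A, g y ∂μ‖ ^ 2 ∂μ
      ≤ μ.real A * ∫ x in A, ‖g x - m‖ ^ 2 ∂μ := by
        refine mul_le_mul_of_nonneg_left ?_ measureReal_nonneg
        exact integral_norm_sub_average_sq_le (hg.mono_measure (Measure.restrict_mono hAB le_rfl)) m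
    _ ≤ μ.real A * ∫ x in B, ‖g x - m‖ ^ 2 ∂μ := by
        refine mul_le_mul_of_nonneg_left ?_ measureReal_nonneg
        exact setIntegral_mono_set hsq (ae_of_all _ fun x => by positivity) hAB.eventuallyLE
    _ ≤ μ.real B * ∫ x in B, ‖g x - m‖ ^ 2 ∂μ := by
        gcongr

end Variance

theorem sq_mul_setAverage_prod_Icc_eq {α E : Type*} [MeasureSpace α] [SFinite (volume : Measure α)]
    [NormedAddCommGroup E] [NormedSpace ℝ E] (Q : Set α) (h : α → ℝ → E) {t : ℝ} (ht : 0 < t)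
    (hint : IntegrableOn (fun x : α × ℝ => ‖h x.1 x.2 - ⨍ r in Icc 0 t, h x.1 r‖ ^ 2)
      (Q ×ˢ Icc 0 t)) :
    t ^ 2 * ⨍ x in Q ×ˢ Icc 0 t, ‖h x.1 x.2 - t⁻¹ • ∫ s in Icc 0 t, h x.1 s‖ ^ 2
      = (volume.real Q)⁻¹ * ∫ x' in Q, volume.real (Icc 0 t) *
          ∫ s in Icc 0 t, ‖h x' s - ⨍ r in Icc 0 t, h x' r‖ ^ 2 := by
  have hvol : volume.real (Icc 0 t) = t := by rw [Real.volume_real_Icc_of_le ht.le, sub_zero]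
  have hmean (x' : α) : t⁻¹ • ∫ s in Icc 0 t, h x' s = ⨍ r in Icc 0 t, h x' r := by
    rw [setAverage_eq, hvol]
  simp_rw [hmean]
  rw [Measure.volume_eq_prod] at hint ⊢
  rw [setAverage_eq, measureReal_prod_prod, setIntegral_prod _ hint, integral_const_mul, hvol,
    smul_eq_mul, mul_inv]
  field_simp

theorem stmt_1_general (d : ℕ) (ℓ T : ℝ)
    (h : (Fin d → ℝ) → ℝ → EuclideanSpace ℝ (Fin d))
    (hcont : Continuous (Function.uncurry h)) :
    MonotoneOn (fun t : ℝ =>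
      (t^2 / ℓ^2) *
        ⨍ x in (Set.Icc (fun _ : Fin d => -ℓ) (fun _ => ℓ)) ×ˢ Set.Icc (0:ℝ) t,
          ‖h x.1 x.2 - t⁻¹ • ∫ s in Set.Icc (0:ℝ) t, h x.1 s‖^2)
      (Set.Ioc 0 T) := by
  set Q : Set (Fin d → ℝ) := Icc (fun _ => -ℓ) (fun _ => ℓ)
  have hmean (t : ℝ) : Continuous fun x' => ⨍ r in Icc 0 t, h x' r := by
    simp_rw [setAverage_eq]
    exact (continuous_parametric_integral_of_continuous (μ := volume) hcont isCompact_Icc)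
      |>.const_smul (volume.real (Icc 0 t))⁻¹
  have hdev (t : ℝ) : Continuous fun x : (Fin d → ℝ) × ℝ =>
      ‖h x.1 x.2 - ⨍ r in Icc 0 t, h x.1 r‖ ^ 2 :=
    (hcont.sub ((hmean t).comp continuous_fst)).norm.pow 2
  have key (t : ℝ) (ht : 0 < t) :
      (t ^ 2 / ℓ ^ 2) * ⨍ x in Q ×ˢ Icc 0 t, ‖h x.1 x.2 - t⁻¹ • ∫ s in Icc 0 t, h x.1 s‖ ^ 2
        = (ℓ ^ 2 * volume.real Q)⁻¹ * ∫ x' in Q, volume.real (Icc 0 t) *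
          ∫ s in Icc 0 t, ‖h x' s - ⨍ r in Icc 0 t, h x' r‖ ^ 2 := by
    rw [div_mul_eq_mul_div, sq_mul_setAverage_prod_Icc_eq Q h ht
      ((hdev t).continuousOn.integrableOn_compact (isCompact_Icc.prod isCompact_Icc)), mul_inv]
    ring
  have hvar (t : ℝ) : IntegrableOn (fun x' => volume.real (Icc 0 t) *
      ∫ s in Icc 0 t, ‖h x' s - ⨍ r in Icc 0 t, h x' r‖ ^ 2) Q :=
    (continuous_const.mul (continuous_parametric_integral_of_continuous (hdev t) isCompact_Icc))
      |>.continuousOn.integrableOn_compact isCompact_Icc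
  intro s hs t ht hst
  simp only [key s hs.1, key t ht.1]
  refine mul_le_mul_of_nonneg_left
    (setIntegral_mono_on (hvar s) (hvar t) measurableSet_Icc fun x' _ => ?_) (by positivity)
  have hx' : Continuous (h x') := hcont.comp (Continuous.prodMk_right x')
  exact measureReal_mul_setIntegral_norm_sub_setAverage_sq_mono (Icc_subset_Icc_right hst)
    measure_Icc_lt_top.ne ((memLp_two_iff_integrable_sq_norm hx'.aestronglyMeasurable).2
      (hx'.norm.pow 2).integrableOn_Icc)

/-- **Monotonicity formula.** For `h ∈ L²(Q_{ℓ,T};ℝ^d)` (continuous, so that vertical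
traces are defined), the map `t ↦ (t²/ℓ²) ⨍_{Q_{ℓ,t}} |h - h̄_t|²` is non-decreasing on `(0,T]`. -/
theorem stmt_1 (d : ℕ) (ℓ T : ℝ) (hℓ : 0 < ℓ) (hT : 0 < T)
    (h : (Fin d → ℝ) → ℝ → EuclideanSpace ℝ (Fin d))
    (hcont : Continuous (Function.uncurry h))
    (hL2 : MemLp (fun x : (Fin d → ℝ) × ℝ => h x.1 x.2) 2
      (volume.restrict ((Set.Icc (fun _ : Fin d => -ℓ) (fun _ => ℓ)) ×ˢ Set.Icc (0:ℝ) T))) :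
    MonotoneOn (fun t : ℝ =>
      (t^2 / ℓ^2) *
        ⨍ x in (Set.Icc (fun _ : Fin d => -ℓ) (fun _ => ℓ)) ×ˢ Set.Icc (0:ℝ) t,
          ‖h x.1 x.2 - t⁻¹ • ∫ s in Set.Icc (0:ℝ) t, h x.1 s‖^2)
      (Set.Ioc 0 T) :=
  stmt_1_general d ℓ T h hcont
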